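/- For the completion of any variable-isolated ASPMT program in which no variables occur in arguments of uninterpreted functions, applying the variable elimination method repeatedly to each equivalence of the completion results in a formula that is classically equivalent to the completion and contains no variables. -/

import Mathlib

/-!
A deep embedding of (one-sorted) first-order logic with equality,
following the functional stable model semantics of
Bartholomew & Lee, used by the ASPMT / aspsmt2smt paper.
-/

namespace ASPMT

/-- A first-order signature: function symbols and predicate symbols with arities. -/
structure Signature where
  Func : Type
  Pred : Type
  funcAr : Func → ℕ
  predAr : Pred → ℕ

variable {σ : Signature}

/-- First-order terms; variables are indexed by natural numbers. -/
inductive Term (σ : Signature) : Type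
  | var : ℕ → Term σ
  | app : (f : σ.Func) → (Fin (σ.funcAr f) → Term σ) → Term σ

/-- First-order formulas (with equality). `¬F` is `F.imp falsum`. -/
inductive Formula (σ : Signature) : Type
  | falsum : Formula σ
  | eq : Term σ → Term σ → Formula σ
  | pred : (p : σ.Pred) → (Fin (σ.predAr p) → Term σ) → Formula σ
  | and : Formula σ → Formula σ → Formula σ
  | or : Formula σ → Formula σ → Formula σ
  | imp : Formula σ → Formula σ → Formula σ
  | all : ℕ → Formula σ → Formula σ
  | ex : ℕ → Formula σ → Formula σ

/-- Negation, as an abbreviation. -/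
def Formula.not (F : Formula σ) : Formula σ := F.imp .falsum

/-- An interpretation (structure) for the signature, with nonempty universe. -/
structure Interp (σ : Signature) where
  M : Type
  nonempty : Nonempty M
  funcI : (f : σ.Func) → (Fin (σ.funcAr f) → M) → M
  predI : (p : σ.Pred) → (Fin (σ.predAr p) → M) → Prop

/-- Updating a variable assignment at a variable. -/
def updAssign {α : Type} (ν : ℕ → α) (x : ℕ) (a : α) : ℕ → α :=
  fun y => if y = x then a else ν y

/-- Evaluation of a term in an interpretation under a variable assignment. -/
def Term.eval (I : Interp σ) (ν : ℕ → I.M) : Term σ → I.M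
  | .var x => ν x
  | .app f ts => I.funcI f fun i => (ts i).eval I ν

/-- Tarskian satisfaction. -/
def Formula.Sat (I : Interp σ) : (ν : ℕ → I.M) → Formula σ → Prop
  | _, .falsum => False
  | ν, .eq t u => t.eval I ν = u.eval I ν
  | ν, .pred p ts => I.predI p fun i => (ts i).eval I ν
  | ν, .and F G => F.Sat I ν ∧ G.Sat I ν
  | ν, .or F G => F.Sat I ν ∨ G.Sat I ν
  | ν, .imp F G => F.Sat I ν → G.Sat I ν
  | ν, .all x F => ∀ a : I.M, F.Sat I (updAssign ν x a)
  | ν, .ex x F => ∃ a : I.M, F.Sat I (updAssign ν x a)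

/-- Variables occurring in a term. -/
def Term.vars : Term σ → Set ℕ
  | .var x => {x}
  | .app _ ts => ⋃ i, (ts i).vars

/-- Free variables of a formula. -/
def Formula.fv : Formula σ → Set ℕ
  | .falsum => ∅
  | .eq t u => t.vars ∪ u.vars
  | .pred _ ts => ⋃ i, (ts i).vars
  | .and F G => F.fv ∪ G.fv
  | .or F G => F.fv ∪ G.fv
  | .imp F G => F.fv ∪ G.fv
  | .all x F => F.fv \ {x}
  | .ex x F => F.fv \ {x}

end ASPMT


namespace ASPMT

variable {σ : Signature}

/-- Substitution of a term `t` for a variable `x` in a term. -/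
def Term.subst : Term σ → ℕ → Term σ → Term σ
  | .var y, x, t => if y = x then t else .var y
  | .app f ts, x, t => .app f fun i => (ts i).subst x t

/-- Atomic formulas. -/
inductive Atom (σ : Signature) : Type
  | eq : Term σ → Term σ → Atom σ
  | pred : (p : σ.Pred) → (Fin (σ.predAr p) → Term σ) → Atom σ

/-- A literal: an atomic formula, possibly preceded with `¬` (`pos = false`). -/
structure Lit (σ : Signature) where
  atom : Atom σ
  pos : Bool

/-- A conjunction `C₁ ∧ … ∧ Cₙ` of possibly negated atomic formulas. -/
abbrev Conj (σ : Signature) := List (Lit σ)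

/-- Variables occurring in an atomic formula. -/
def Atom.vars : Atom σ → Set ℕ
  | .eq t u => t.vars ∪ u.vars
  | .pred _ ts => ⋃ i, (ts i).vars

/-- Variables occurring in a literal. -/
def Lit.vars (l : Lit σ) : Set ℕ := l.atom.vars

/-- Variables occurring in a conjunction of literals. -/
def conjVars (L : Conj σ) : Set ℕ := {x | ∃ l ∈ L, x ∈ l.vars}

/-- Substitution in an atomic formula. -/
def Atom.subst : Atom σ → ℕ → Term σ → Atom σ
  | .eq a b, x, t => .eq (a.subst x t) (b.subst x t)
  | .pred p ts, x, t => .pred p fun i => (ts i).subst x t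

/-- Substitution in a literal. -/
def Lit.subst (l : Lit σ) (x : ℕ) (t : Term σ) : Lit σ := ⟨l.atom.subst x t, l.pos⟩

/-- `D^x_t`: the result of substituting `t` for every occurrence of the variable
`x` in the conjunction `D`. -/
def conjSubst (x : ℕ) (t : Term σ) (L : Conj σ) : Conj σ := L.map (Lit.subst · x t)

/-- The literal `l` is a non-negated conjunct of the form `x = t` or `t = x`. -/
def isolator (x : ℕ) (l : Lit σ) : Prop :=
  l.pos = true ∧ ∃ t : Term σ, l.atom = .eq (.var x) t ∨ l.atom = .eq t (.var x)

/-- The edge relation of the variable dependency graph of a conjunction `L`: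
there is an edge from `v` to `u` if some conjunct of `L` is `v = t` or `t = v`
for a term `t` in which `u` appears. -/
def depEdgeC (L : Conj σ) (v u : ℕ) : Prop :=
  ∃ l ∈ L, l.pos = true ∧ ∃ t : Term σ,
    (l.atom = .eq (.var v) t ∨ l.atom = .eq t (.var v)) ∧ u ∈ t.vars

/-- `v` depends on `u`: there is a directed path (of length ≥ 1) from `v` to `u`
in the variable dependency graph of `L`. -/
def dependsOn (L : Conj σ) : ℕ → ℕ → Prop := Relation.TransGen (depEdgeC L)

/-- The variable dependency graph of `L` is acyclic. -/
def AcyclicDeps (L : Conj σ) : Prop := ∀ v, ¬ dependsOn L v v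

/-- One step of the substitution process: select a variable `x` still occurring in
`L` and a non-negated conjunct `x = t` or `t = x` of `L` such that no variable
occurring in `t` depends on `x`, and replace `L` by `L^x_t`. -/
def SubstStep (L L' : Conj σ) : Prop :=
  ∃ x ∈ conjVars L, ∃ t : Term σ,
    (∃ l ∈ L, l.pos = true ∧ (l.atom = .eq (.var x) t ∨ l.atom = .eq t (.var x))) ∧
    (∀ u ∈ t.vars, ¬ dependsOn L u x) ∧
    L' = conjSubst x t L

/-- Satisfaction of an atomic formula. -/
def Atom.SatA (I : Interp σ) (ν : ℕ → I.M) : Atom σ → Prop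
  | .eq t u => t.eval I ν = u.eval I ν
  | .pred p ts => I.predI p fun i => (ts i).eval I ν

/-- Satisfaction of a literal. -/
def Lit.SatL (I : Interp σ) (ν : ℕ → I.M) (l : Lit σ) : Prop :=
  if l.pos then l.atom.SatA I ν else ¬ l.atom.SatA I ν

/-- Satisfaction of a conjunction of literals. -/
def SatConj (I : Interp σ) (ν : ℕ → I.M) (L : Conj σ) : Prop :=
  ∀ l ∈ L, l.SatL I ν

end ASPMT


namespace ASPMT

variable {σ : Signature}

/-- The state of the substitution process on an implication `B → (f = u)`:
the body `B` together with the current value term `u` (initially the variable `v`);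
the ground head term `f` is unaffected by substitutions. -/
abbrev State8 (σ : Signature) := Conj σ × Term σ

/-- Variables occurring in the implication `B → (f = u)` (with `f` ground). -/
def vars8 (S : State8 σ) : Set ℕ := conjVars S.1 ∪ S.2.vars

/-- One step of the substitution process on `D = (B → f = u)`: select a variable
`x` still occurring in `D` and a non-negated conjunct `x = t` or `t = x` in the
body `B` such that no variable occurring in `t` depends on `x`, and replace `D`
by `D^x_t`. -/
def SubstStep8 (S S' : State8 σ) : Prop :=
  ∃ x ∈ vars8 S, ∃ t : Term σ,
    (∃ l ∈ S.1, l.pos = true ∧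
      (l.atom = .eq (.var x) t ∨ l.atom = .eq t (.var x))) ∧
    (∀ u ∈ t.vars, ¬ dependsOn S.1 u x) ∧
    S' = (conjSubst x t S.1, S.2.subst x t)

end ASPMT


namespace ASPMT

variable {σ : Signature}

/-- Truth `⊤ := ¬⊥`. -/
def verum : Formula σ := Formula.falsum.imp .falsum

/-- Conjunction of a finite list of formulas. -/
def bigAnd (l : List (Formula σ)) : Formula σ := l.foldr .and verum

/-- Disjunction of a finite list of formulas. -/
def bigOr (l : List (Formula σ)) : Formula σ := l.foldr .or .falsum

/-- `∀ x₁ … xₙ F`. -/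
def allN (xs : List ℕ) (F : Formula σ) : Formula σ := xs.foldr .all F

/-- `∃ x₁ … xₙ F`. -/
def exN (xs : List ℕ) (F : Formula σ) : Formula σ := xs.foldr .ex F

/-- `F ↔ G` as an abbreviation. -/
def Formula.iff (F G : Formula σ) : Formula σ := (F.imp G).and (G.imp F)

/-- An atomic formula as a formula. -/
def Atom.toFormula : Atom σ → Formula σ
  | .eq t u => .eq t u
  | .pred p ts => .pred p ts

/-- A literal as a formula. -/
def Lit.toFormula (l : Lit σ) : Formula σ :=
  if l.pos then l.atom.toFormula else l.atom.toFormula.not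

/-- A conjunction of literals as a formula. -/
def conjToFormula (L : Conj σ) : Formula σ := bigAnd (L.map Lit.toFormula)

/-- A list enumerating the variables of a term. -/
def Term.varList : Term σ → List ℕ
  | .var x => [x]
  | .app f ts =>
      (List.finRange (σ.funcAr f)).foldr (fun i acc => (ts i).varList ++ acc) []

/-- A list enumerating the variables of an atomic formula. -/
def Atom.varList : Atom σ → List ℕ
  | .eq t u => t.varList ++ u.varList
  | .pred p ts =>
      (List.finRange (σ.predAr p)).foldr (fun i acc => (ts i).varList ++ acc) []

/-- A list enumerating the variables of a conjunction of literals. -/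
def conjVarList (L : Conj σ) : List ℕ :=
  L.foldr (fun l acc => l.atom.varList ++ acc) []

/-- An ASPMT program (with no variables in arguments of uninterpreted functions),
presented with its rules grouped by head: `defs` is a list of pairs of a (ground)
head term `f(t)` together with the list of rules `f(t) = v ← B` for that head
(each given by its value variable `v` and its body `B`, a conjunction of possibly
negated atomic formulas); `constraints` is the list of bodies of the constraint
rules `⊥ ← B`.  Distinct groups have distinct head terms. -/
structure Program (σ : Signature) where
  defs : List (Term σ × List (ℕ × Conj σ))
  constraints : List (Conj σ)
  heads_distinct : defs.Pairwise fun a b => a.1 ≠ b.1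

/-- The head term is `f(t)` for an uninterpreted function `f` whose arguments `t`
contain no variables. -/
def IsHead (U : Set σ.Func) (g : Term σ) : Prop :=
  ∃ f ∈ U, ∃ ts : Fin (σ.funcAr f) → Term σ,
    g = Term.app f ts ∧ ∀ i, (ts i).vars = (∅ : Set ℕ)

/-- No variables occur in arguments of uninterpreted functions (the functions in
`U`) in a term. -/
def Term.uGround (U : Set σ.Func) : Term σ → Prop
  | .var _ => True
  | .app f ts => (∀ i, (ts i).uGround U) ∧ (f ∈ U → ∀ i, (ts i).vars = (∅ : Set ℕ))

/-- No variables occur in arguments of uninterpreted functions in an atom. -/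
def Atom.uGround (U : Set σ.Func) : Atom σ → Prop
  | .eq t u => t.uGround U ∧ u.uGround U
  | .pred _ ts => ∀ i, (ts i).uGround U

/-- No variables occur in arguments of uninterpreted functions in a conjunction. -/
def conjUGround (U : Set σ.Func) (L : Conj σ) : Prop := ∀ l ∈ L, l.atom.uGround U

/-- A rule `g = v ← B` is variable isolated: every variable in it occurs in a
non-negated equality conjunct `x = t` or `t = x` of `B`, and the variable
dependency graph of `B` is acyclic. -/
def RuleIsolated (v : ℕ) (B : Conj σ) : Prop :=
  (∀ x ∈ insert v (conjVars B), ∃ l ∈ B, isolator x l) ∧ AcyclicDeps B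

/-- A constraint `⊥ ← B` is variable isolated. -/
def ConstraintIsolated (B : Conj σ) : Prop :=
  (∀ x ∈ conjVars B, ∃ l ∈ B, isolator x l) ∧ AcyclicDeps B

/-- The equivalence `∀w(f = w ↔ ∃x(B₁(w,x) ∨ … ∨ Bₖ(w,x)))` of the completion
for the head term `f(t)` of `d`, where `w` is a fresh variable and in each body
the value variable is renamed to `w` and the remaining variables are
existentially quantified. -/
def compDef (w : ℕ) (d : Term σ × List (ℕ × Conj σ)) : Formula σ :=
  Formula.all w ((Formula.eq d.1 (.var w)).iff
    (bigOr (d.2.map fun r =>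
      let b := conjSubst r.1 (.var w) r.2
      exN ((conjVarList b).filter (· ≠ w)) (conjToFormula b))))

/-- The sentence `¬∃x G` of the completion for a constraint `⊥ ← G`. -/
def compConstraint (b : Conj σ) : Formula σ :=
  (exN (conjVarList b) (conjToFormula b)).not

/-- The completion of a program (using the fresh variable `w`). -/
def completion (P : Program σ) (w : ℕ) : Formula σ :=
  bigAnd (P.defs.map (compDef w) ++ P.constraints.map compConstraint)

/-- The substitution process of the variable elimination method, run to a
variable-free conjunction. -/
def ReachesGround (L L' : Conj σ) : Prop :=
  Relation.ReflTransGen SubstStep L L' ∧ conjVars L' = ∅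

/-- The substitution process of the variable elimination method on an implication
`B → (f = v)`, run to a variable-free result. -/
def ReachesGround8 (B : Conj σ) (v : ℕ) (S : State8 σ) : Prop :=
  Relation.ReflTransGen SubstStep8 (B, Term.var v) S ∧ vars8 S = ∅

/-- The result of applying the variable elimination method to the equivalence of
the completion for the group `d = (f, rules)`:
`F := F₁ ∨ … ∨ Fₖ` where `Fᵢ` is obtained from `Bᵢ` by substituting the head term
`f` for the value variable and running the substitution process to a variable-free
conjunction; `G := G₁ ∧ … ∧ Gₖ` where `Gᵢ` is obtained by running the substitution
process on `Bᵢ → (f = v)` to a variable-free implication; the result is `F ∧ G`. -/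
def ElimDef (d : Term σ × List (ℕ × Conj σ)) (E : Formula σ) : Prop :=
  ∃ Fs : List (Conj σ), ∃ Gs : List (State8 σ),
    List.Forall₂ (fun r F => ReachesGround (conjSubst r.1 d.1 r.2) F) d.2 Fs ∧
    List.Forall₂ (fun r S => ReachesGround8 r.2 r.1 S) d.2 Gs ∧
    E = (bigOr (Fs.map conjToFormula)).and
        (bigAnd (Gs.map fun S => (conjToFormula S.1).imp (Formula.eq d.1 S.2)))

/-- The result of applying the variable elimination method to the conjunctive term
`¬∃x G` of the completion coming from a constraint `⊥ ← G`. -/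
def ElimConstraint (b : Conj σ) (C : Formula σ) : Prop :=
  ∃ b', ReachesGround b b' ∧ C = (conjToFormula b').not

/-- The result of applying the variable elimination method repeatedly to each
equivalence (and each constraint term) of the completion of the program. -/
def MethodResult (P : Program σ) (C : Formula σ) : Prop :=
  ∃ Es Cs : List (Formula σ),
    List.Forall₂ ElimDef P.defs Es ∧
    List.Forall₂ ElimConstraint P.constraints Cs ∧
    C = bigAnd (Es ++ Cs)

end ASPMT

/-!
A substitution step replaces a body `L` by `L^x_t` for a non-negated conjunct `x = t` of `L`.
Every assignment satisfying `L` already gives `x` the value of `t`, while `ν` satisfies `L^x_t`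
iff `ν[x ↦ t(ν)]` satisfies `L`; so a step preserves whether the body is satisfiable, and which
values the head term takes in the models of the body. In an isolated body with acyclic
dependency graph, a sink `x` of the graph is defined by a conjunct `x = t` with `t` ground, and
substituting a ground term keeps the body isolated and acyclic while removing `x`; so the process
runs until no variable is left. Finally `∀v (f = v ↔ ∃x (B₁ ∨ … ∨ Bₖ))` holds iff some `Bᵢ` is
satisfiable with `v = f` (the part `F` of the result) and every `Bᵢ` forces `v = f` (the part `G`).
-/

namespace List

variable {α β : Type*} {R : α → β → Prop} {l₁ : List α} {l₂ : List β}

theorem exists_forall₂ {l : List α} (h : ∀ a ∈ l, ∃ b, R a b) : ∃ l', Forall₂ R l l' := by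
  induction l with
  | nil => exact ⟨[], .nil⟩
  | cons a l ih =>
    obtain ⟨b, hb⟩ := h a mem_cons_self
    obtain ⟨l', hl'⟩ := ih fun a ha => h a (mem_cons_of_mem _ ha)
    exact ⟨b :: l', .cons hb hl'⟩

theorem Forall₂.forall_mem_right {Q : β → Prop} (h : Forall₂ R l₁ l₂)
    (hQ : ∀ a ∈ l₁, ∀ b, R a b → Q b) : ∀ b ∈ l₂, Q b := by
  induction h with
  | nil => simp
  | cons hab _ ih =>
    simp only [mem_cons, forall_eq_or_imp] at hQ ⊢
    exact ⟨hQ.1 _ hab, ih hQ.2⟩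

theorem Forall₂.forall_iff {P : α → Prop} {Q : β → Prop} (h : Forall₂ R l₁ l₂)
    (hPQ : ∀ a ∈ l₁, ∀ b, R a b → (P a ↔ Q b)) : (∀ a ∈ l₁, P a) ↔ ∀ b ∈ l₂, Q b := by
  induction h with
  | nil => simp
  | cons hab _ ih =>
    simp only [mem_cons, forall_eq_or_imp] at hPQ ⊢
    rw [hPQ.1 _ hab, ih hPQ.2]

theorem Forall₂.exists_iff {P : α → Prop} {Q : β → Prop} (h : Forall₂ R l₁ l₂)
    (hPQ : ∀ a ∈ l₁, ∀ b, R a b → (P a ↔ Q b)) : (∃ a ∈ l₁, P a) ↔ ∃ b ∈ l₂, Q b := by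
  induction h with
  | nil => simp
  | cons hab _ ih =>
    simp only [mem_cons, forall_eq_or_imp, exists_eq_or_imp] at hPQ ⊢
    rw [hPQ.1 _ hab, ih hPQ.2]

end List

namespace ASPMT

variable {σ : Signature} {I : Interp σ}

theorem updAssign_self {α : Type} (ν : ℕ → α) (x : ℕ) : updAssign ν x (ν x) = ν := by
  funext y
  by_cases h : y = x <;> simp [updAssign, h]

theorem Term.eval_subst (ν : ℕ → I.M) (x : ℕ) (t s : Term σ) :
    (s.subst x t).eval I ν = s.eval I (updAssign ν x (t.eval I ν)) := by
  induction s with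
  | var y => by_cases h : y = x <;> simp [Term.subst, Term.eval, updAssign, h]
  | app f ts ih => simp only [Term.subst, Term.eval, ih]

theorem Term.eval_congr {ν ν' : ℕ → I.M} (s : Term σ) (h : ∀ y ∈ s.vars, ν y = ν' y) :
    s.eval I ν = s.eval I ν' := by
  induction s with
  | var y => exact h y rfl
  | app f ts ih =>
    simp only [Term.eval]
    congr 1
    funext i
    exact ih i fun y hy => h y (Set.mem_iUnion.2 ⟨i, hy⟩)

theorem Term.eval_ground {s : Term σ} (hs : s.vars = ∅) (ν ν' : ℕ → I.M) :
    s.eval I ν = s.eval I ν' :=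
  s.eval_congr (by simp [hs])

theorem Term.vars_subst_ground {x : ℕ} {t : Term σ} (ht : t.vars = ∅) (s : Term σ) :
    (s.subst x t).vars ⊆ s.vars \ {x} := by
  induction s with
  | var y =>
    by_cases h : y = x
    · simp [Term.subst, h, ht]
    · simp [Term.subst, Term.vars, h]
  | app f ts ih =>
    simp only [Term.subst, Term.vars]
    exact Set.iUnion_subset fun i =>
      (ih i).trans (Set.sdiff_subset_sdiff_left (Set.subset_iUnion (fun i => (ts i).vars) i))

theorem Term.eq_var_of_subst_ground {x v : ℕ} {t s : Term σ} (ht : t.vars = ∅)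
    (h : s.subst x t = .var v) : s = .var v := by
  cases s with
  | var y =>
    by_cases hy : y = x
    · simp [Term.subst, hy] at h
      simp [h, Term.vars] at ht
    · simpa [Term.subst, hy] using h
  | app f ts => simp [Term.subst] at h

theorem Atom.satA_subst (ν : ℕ → I.M) (x : ℕ) (t : Term σ) (A : Atom σ) :
    (A.subst x t).SatA I ν ↔ A.SatA I (updAssign ν x (t.eval I ν)) := by
  cases A <;> simp [Atom.subst, Atom.SatA, Term.eval_subst]

theorem satConj_subst (ν : ℕ → I.M) (x : ℕ) (t : Term σ) (L : Conj σ) :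
    SatConj I ν (conjSubst x t L) ↔ SatConj I (updAssign ν x (t.eval I ν)) L := by
  simp [SatConj, conjSubst, Lit.SatL, Lit.subst, Atom.satA_subst]

theorem Atom.satA_congr {ν ν' : ℕ → I.M} (A : Atom σ) (h : ∀ y ∈ A.vars, ν y = ν' y) :
    A.SatA I ν ↔ A.SatA I ν' := by
  cases A with
  | eq a b =>
    simp only [Atom.SatA, a.eval_congr fun y hy => h y (Or.inl hy),
      b.eval_congr fun y hy => h y (Or.inr hy)]
  | pred p ts =>
    simp only [Atom.SatA]
    rw [funext fun i => (ts i).eval_congr fun y hy => h y (Set.mem_iUnion.2 ⟨i, hy⟩)]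

theorem satConj_congr {ν ν' : ℕ → I.M} {L : Conj σ} (h : ∀ y ∈ conjVars L, ν y = ν' y) :
    SatConj I ν L ↔ SatConj I ν' L :=
  forall₂_congr fun l hl => by
    simp only [Lit.SatL, l.atom.satA_congr fun y hy => h y ⟨l, hl, hy⟩]

theorem satConj_ground {L : Conj σ} (hL : conjVars L = ∅) (ν ν' : ℕ → I.M) :
    SatConj I ν L ↔ SatConj I ν' L :=
  satConj_congr (by simp [hL])

theorem Atom.vars_subst_ground {x : ℕ} {t : Term σ} (ht : t.vars = ∅) (A : Atom σ) :
    (A.subst x t).vars ⊆ A.vars \ {x} := by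
  cases A with
  | eq a b =>
    exact Set.union_subset
      ((Term.vars_subst_ground ht a).trans (Set.sdiff_subset_sdiff_left Set.subset_union_left))
      ((Term.vars_subst_ground ht b).trans (Set.sdiff_subset_sdiff_left Set.subset_union_right))
  | pred p ts =>
    exact Set.iUnion_subset fun i => (Term.vars_subst_ground ht (ts i)).trans
      (Set.sdiff_subset_sdiff_left (Set.subset_iUnion (fun i => (ts i).vars) i))

theorem conjVars_subst_ground {x : ℕ} {t : Term σ} (ht : t.vars = ∅) (L : Conj σ) :
    conjVars (conjSubst x t L) ⊆ conjVars L \ {x} := by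
  rintro y ⟨l', hl', hy⟩
  obtain ⟨l, hl, rfl⟩ := List.mem_map.1 hl'
  obtain ⟨hy, hyx⟩ := Atom.vars_subst_ground ht l.atom hy
  exact ⟨⟨l, hl, hy⟩, hyx⟩

theorem mem_conjVarList {L : Conj σ} {y : ℕ} : y ∈ conjVarList L ↔ y ∈ conjVars L := by
  have mem_term (s : Term σ) : y ∈ s.varList ↔ y ∈ s.vars := by
    induction s with
    | var x => simp [Term.varList, Term.vars]
    | app f ts ih => simp [Term.varList, Term.vars, ih]
  have mem_atom (A : Atom σ) : y ∈ A.varList ↔ y ∈ A.vars := by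
    cases A <;> simp [Atom.varList, Atom.vars, mem_term]
  simp [conjVarList, conjVars, Lit.vars, mem_atom]

theorem conjVars_finite (L : Conj σ) : (conjVars L).Finite :=
  (conjVarList L).finite_toSet.subset fun _ => mem_conjVarList.2

theorem sat_bigAnd (ν : ℕ → I.M) (Fs : List (Formula σ)) :
    (bigAnd Fs).Sat I ν ↔ ∀ F ∈ Fs, F.Sat I ν := by
  induction Fs <;> simp_all [bigAnd, verum, Formula.Sat]

theorem sat_bigOr (ν : ℕ → I.M) (Fs : List (Formula σ)) :
    (bigOr Fs).Sat I ν ↔ ∃ F ∈ Fs, F.Sat I ν := by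
  induction Fs <;> simp_all [bigOr, Formula.Sat]

theorem sat_not (ν : ℕ → I.M) (F : Formula σ) : F.not.Sat I ν ↔ ¬ F.Sat I ν := Iff.rfl

theorem sat_iff (ν : ℕ → I.M) (F G : Formula σ) :
    (F.iff G).Sat I ν ↔ (F.Sat I ν ↔ G.Sat I ν) :=
  iff_iff_implies_and_implies.symm

theorem sat_conjToFormula (ν : ℕ → I.M) (L : Conj σ) :
    (conjToFormula L).Sat I ν ↔ SatConj I ν L := by
  have sat_lit (l : Lit σ) : l.toFormula.Sat I ν ↔ l.SatL I ν := by
    rcases l with ⟨A | A, _ | _⟩ <;> rfl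
  simp [conjToFormula, sat_bigAnd, SatConj, sat_lit]

theorem sat_exN (ν : ℕ → I.M) (xs : List ℕ) (F : Formula σ) :
    (exN xs F).Sat I ν ↔ ∃ μ : ℕ → I.M, F.Sat I μ ∧ ∀ y ∉ xs, μ y = ν y := by
  induction xs generalizing ν with
  | nil =>
    refine ⟨fun h => ⟨ν, h, fun _ _ => rfl⟩, ?_⟩
    rintro ⟨μ, hμ, hμν⟩
    rwa [funext fun y => hμν y List.not_mem_nil] at hμ
  | cons x xs ih =>
    simp only [exN, List.foldr_cons, Formula.Sat] at ih ⊢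
    simp only [ih, List.mem_cons, not_or]
    constructor
    · rintro ⟨a, μ, hμ, hμν⟩
      exact ⟨μ, hμ, fun y ⟨hyx, hy⟩ => by rw [hμν y hy, updAssign, if_neg hyx]⟩
    · rintro ⟨μ, hμ, hμν⟩
      refine ⟨μ x, μ, hμ, fun y hy => ?_⟩
      by_cases hyx : y = x
      · simp [updAssign, hyx]
      · rw [updAssign, if_neg hyx, hμν y ⟨hyx, hy⟩]

theorem sat_exN_conjToFormula (ν : ℕ → I.M) (xs : List ℕ) (L : Conj σ) :
    (exN xs (conjToFormula L)).Sat I ν ↔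
      ∃ μ : ℕ → I.M, SatConj I μ L ∧ ∀ y ∈ conjVars L, y ∉ xs → μ y = ν y := by
  simp only [sat_exN, sat_conjToFormula]
  refine ⟨fun ⟨μ, hμ, hμν⟩ => ⟨μ, hμ, fun y _ hy => hμν y hy⟩, ?_⟩
  rintro ⟨μ, hμ, hμν⟩
  refine ⟨fun y => if y ∈ xs then μ y else ν y, (satConj_congr fun y hy => ?_).1 hμ,
    fun y hy => if_neg hy⟩
  by_cases hyxs : y ∈ xs
  · rw [if_pos hyxs]
  · rw [if_neg hyxs, hμν y hy hyxs]

theorem fv_conjToFormula (L : Conj σ) : (conjToFormula L).fv ⊆ conjVars L := by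
  induction L with
  | nil => simp [conjToFormula, bigAnd, verum, Formula.fv]
  | cons l L ih =>
    have fv_lit : l.toFormula.fv = l.vars := by
      rcases l with ⟨A | A, _ | _⟩ <;> simp [Lit.toFormula, Atom.toFormula, Formula.not,
        Formula.fv, Lit.vars, Atom.vars]
    simp only [conjToFormula, List.map_cons, bigAnd, List.foldr_cons, Formula.fv] at ih ⊢
    rintro y (hy | hy)
    · exact ⟨l, List.mem_cons_self, fv_lit ▸ hy⟩
    · obtain ⟨l', hl', hy⟩ := ih hy
      exact ⟨l', List.mem_cons_of_mem l hl', hy⟩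

theorem fv_bigAnd {Fs : List (Formula σ)} (h : ∀ F ∈ Fs, F.fv = ∅) : (bigAnd Fs).fv = ∅ := by
  induction Fs <;> simp_all [bigAnd, verum, Formula.fv]

theorem fv_bigOr {Fs : List (Formula σ)} (h : ∀ F ∈ Fs, F.fv = ∅) : (bigOr Fs).fv = ∅ := by
  induction Fs <;> simp_all [bigOr, Formula.fv]

def Defines (L : Conj σ) (x : ℕ) (t : Term σ) : Prop :=
  ∃ l ∈ L, l.pos = true ∧ (l.atom = .eq (.var x) t ∨ l.atom = .eq t (.var x))

theorem Defines.mem_conjVars {L : Conj σ} {x : ℕ} {t : Term σ} (h : Defines L x t) :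
    x ∈ conjVars L := by
  obtain ⟨l, hl, -, he | he⟩ := h <;> refine ⟨l, hl, ?_⟩ <;>
    simp [Lit.vars, he, Atom.vars, Term.vars]

theorem Defines.updAssign_eq {L : Conj σ} {x : ℕ} {t : Term σ} (h : Defines L x t)
    {ν : ℕ → I.M} (hν : SatConj I ν L) : updAssign ν x (t.eval I ν) = ν := by
  obtain ⟨l, hl, hpos, he⟩ := h
  have hlν := hν l hl
  have hx : ν x = t.eval I ν := by
    rcases he with he | he <;> simp [Lit.SatL, hpos, he, Atom.SatA, Term.eval] at hlν
    exacts [hlν, hlν.symm]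
  rw [← hx, updAssign_self]

theorem Defines.satConj_subst {L : Conj σ} {x : ℕ} {t : Term σ} (h : Defines L x t)
    {ν : ℕ → I.M} (hν : SatConj I ν L) : SatConj I ν (conjSubst x t L) :=
  (ASPMT.satConj_subst ν x t L).2 (by rwa [h.updAssign_eq hν])

theorem SubstStep.exists_satConj_iff {L L' : Conj σ} (h : SubstStep L L') :
    (∃ ν : ℕ → I.M, SatConj I ν L) ↔ ∃ ν : ℕ → I.M, SatConj I ν L' := by
  obtain ⟨x, -, t, hdef, -, rfl⟩ := h
  exact ⟨fun ⟨ν, hν⟩ => ⟨ν, Defines.satConj_subst hdef hν⟩,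
    fun ⟨ν, hν⟩ => ⟨_, (satConj_subst ν x t L).1 hν⟩⟩

theorem SubstStep8.forall_satConj_imp_iff {S S' : State8 σ} (h : SubstStep8 S S')
    (p : I.M → Prop) :
    (∀ ν, SatConj I ν S.1 → p (S.2.eval I ν)) ↔ ∀ ν, SatConj I ν S'.1 → p (S'.2.eval I ν) := by
  obtain ⟨x, -, t, hdef, -, rfl⟩ := h
  refine ⟨fun H ν hν => ?_, fun H ν hν => ?_⟩
  · rw [Term.eval_subst]
    exact H _ ((satConj_subst ν x t S.1).1 hν)
  · simpa only [Term.eval_subst, Defines.updAssign_eq hdef hν] using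
      H ν (Defines.satConj_subst hdef hν)

theorem exists_satConj_iff_of_reflTransGen {L L' : Conj σ}
    (h : Relation.ReflTransGen SubstStep L L') :
    (∃ ν : ℕ → I.M, SatConj I ν L) ↔ ∃ ν : ℕ → I.M, SatConj I ν L' := by
  induction h with
  | refl => rfl
  | tail _ hstep ih => exact ih.trans hstep.exists_satConj_iff

theorem forall_satConj_imp_iff_of_reflTransGen {S S' : State8 σ}
    (h : Relation.ReflTransGen SubstStep8 S S') (p : I.M → Prop) :
    (∀ ν, SatConj I ν S.1 → p (S.2.eval I ν)) ↔ ∀ ν, SatConj I ν S'.1 → p (S'.2.eval I ν) := by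
  induction h with
  | refl => rfl
  | tail _ hstep ih => exact ih.trans (hstep.forall_satConj_imp_iff p)

theorem ReachesGround.satConj_iff {L L' : Conj σ} (h : ReachesGround L L') (ν : ℕ → I.M) :
    SatConj I ν L' ↔ ∃ μ : ℕ → I.M, SatConj I μ L := by
  rw [exists_satConj_iff_of_reflTransGen h.1]
  exact ⟨fun hν => ⟨ν, hν⟩, fun ⟨μ, hμ⟩ => (satConj_ground h.2 μ ν).1 hμ⟩

theorem ReachesGround8.forall_satConj_imp_iff {B : Conj σ} {v : ℕ} {S : State8 σ}
    (h : ReachesGround8 B v S) (ν : ℕ → I.M) (p : I.M → Prop) :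
    (∀ μ, SatConj I μ B → p (μ v)) ↔ (SatConj I ν S.1 → p (S.2.eval I ν)) := by
  obtain ⟨hS₁, hS₂⟩ := Set.union_empty_iff.1 h.2
  refine (forall_satConj_imp_iff_of_reflTransGen h.1 p).trans
    ⟨fun H hν => H ν hν, fun H μ hμ => ?_⟩
  rw [Term.eval_ground hS₂ μ ν]
  exact H ((satConj_ground hS₁ μ ν).1 hμ)

theorem depEdgeC_mem_conjVars {L : Conj σ} {v u : ℕ} (h : depEdgeC L v u) : u ∈ conjVars L := by
  obtain ⟨l, hl, -, t, he | he, hu⟩ := h <;> refine ⟨l, hl, ?_⟩ <;>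
    simp [Lit.vars, he, Atom.vars, hu]

theorem exists_sink {L : Conj σ} (hacy : AcyclicDeps L) (hne : (conjVars L).Nonempty) :
    ∃ x ∈ conjVars L, ∀ u, ¬ depEdgeC L x u := by
  have : IsStrictOrder ℕ (Function.swap (dependsOn L)) :=
    { irrefl := hacy, trans := fun _ _ _ hab hbc => hbc.trans hab }
  obtain ⟨x, hx⟩ := hne
  obtain ⟨⟨x, hx⟩, -, hmin⟩ :=
    ((conjVars_finite L).wellFoundedOn (r := Function.swap (dependsOn L))).has_min Set.univ
      ⟨⟨x, hx⟩, trivial⟩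
  exact ⟨x, hx, fun u hu => hmin ⟨u, depEdgeC_mem_conjVars hu⟩ trivial (.single hu)⟩

theorem exists_defines_ground {L : Conj σ} (hiso : ∀ y ∈ conjVars L, ∃ l ∈ L, isolator y l)
    (hacy : AcyclicDeps L) (hne : (conjVars L).Nonempty) :
    ∃ x ∈ conjVars L, ∃ t : Term σ, Defines L x t ∧ t.vars = ∅ := by
  obtain ⟨x, hx, hsink⟩ := exists_sink hacy hne
  obtain ⟨l, hl, hpos, t, he⟩ := hiso x hx
  exact ⟨x, hx, t, ⟨l, hl, hpos, he⟩,
    Set.eq_empty_of_forall_notMem fun u hu => hsink u ⟨l, hl, hpos, t, he, hu⟩⟩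

theorem depEdgeC_of_subst_ground {L : Conj σ} {x v u : ℕ} {t : Term σ} (ht : t.vars = ∅)
    (h : depEdgeC (conjSubst x t L) v u) : depEdgeC L v u := by
  obtain ⟨l', hl', hpos, s, he, hu⟩ := h
  obtain ⟨⟨A, pos⟩, hl, rfl⟩ := List.mem_map.1 hl'
  cases A with
  | pred p ts => simp [Lit.subst, Atom.subst] at he
  | eq a b =>
    simp only [Lit.subst, Atom.subst, Atom.eq.injEq] at he
    rcases he with ⟨ha, rfl⟩ | ⟨rfl, hb⟩
    · exact ⟨_, hl, hpos, b, Or.inl (by rw [Term.eq_var_of_subst_ground ht ha]),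
        (Term.vars_subst_ground ht b hu).1⟩
    · exact ⟨_, hl, hpos, a, Or.inr (by rw [Term.eq_var_of_subst_ground ht hb]),
        (Term.vars_subst_ground ht a hu).1⟩

theorem AcyclicDeps.subst_ground {L : Conj σ} {x : ℕ} {t : Term σ} (hacy : AcyclicDeps L)
    (ht : t.vars = ∅) : AcyclicDeps (conjSubst x t L) :=
  fun v hv => hacy v (Relation.TransGen.mono (fun _ _ => depEdgeC_of_subst_ground ht) v v hv)

theorem isolator_subst {x y : ℕ} {l : Lit σ} (h : isolator y l) (hyx : y ≠ x) (t : Term σ) :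
    isolator y (l.subst x t) := by
  obtain ⟨hpos, s, he | he⟩ := h
  · exact ⟨hpos, s.subst x t, Or.inl (by simp [Lit.subst, he, Atom.subst, Term.subst, hyx])⟩
  · exact ⟨hpos, s.subst x t, Or.inr (by simp [Lit.subst, he, Atom.subst, Term.subst, hyx])⟩

def IsolatedState (S : State8 σ) : Prop :=
  (∀ y ∈ vars8 S, ∃ l ∈ S.1, isolator y l) ∧ AcyclicDeps S.1

theorem RuleIsolated.isolatedState {v : ℕ} {B : Conj σ} (h : RuleIsolated v B) :
    IsolatedState (B, .var v) := by
  refine ⟨fun y hy => h.1 y ?_, h.2⟩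
  rcases hy with hy | rfl
  exacts [Set.mem_insert_of_mem v hy, Set.mem_insert y _]

theorem IsolatedState.vars8_subset {S : State8 σ} (h : IsolatedState S) :
    vars8 S ⊆ conjVars S.1 := fun y hy =>
  let ⟨l, hl, hpos, _, he⟩ := h.1 y hy
  Defines.mem_conjVars ⟨l, hl, hpos, he⟩

theorem IsolatedState.subst_ground {S : State8 σ} (h : IsolatedState S) {x : ℕ} {t : Term σ}
    (ht : t.vars = ∅) : IsolatedState (conjSubst x t S.1, S.2.subst x t) := by
  refine ⟨fun y hy => ?_, h.2.subst_ground ht⟩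
  have hy' : y ∈ vars8 S \ {x} := hy.elim
    (fun hy => Set.sdiff_subset_sdiff_left Set.subset_union_left (conjVars_subst_ground ht _ hy))
    (fun hy => Set.sdiff_subset_sdiff_left Set.subset_union_right (Term.vars_subst_ground ht _ hy))
  obtain ⟨l, hl, hiso⟩ := h.1 y hy'.1
  exact ⟨l.subst x t, List.mem_map_of_mem hl, isolator_subst hiso hy'.2 t⟩

theorem IsolatedState.exists_ground_run {S : State8 σ} (h : IsolatedState S) :
    ∃ S', Relation.ReflTransGen SubstStep8 S S' ∧ vars8 S' = ∅ := by
  induction hn : (conjVars S.1).ncard using Nat.strong_induction_on generalizing S with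
  | _ n ih =>
  rcases (conjVars S.1).eq_empty_or_nonempty with hS | hS
  · exact ⟨S, .refl, Set.subset_empty_iff.1 (hS ▸ h.vars8_subset)⟩
  obtain ⟨x, hx, t, hdef, ht⟩ := exists_defines_ground (fun y hy => h.1 y (Or.inl hy)) h.2 hS
  have hlt : (conjVars (conjSubst x t S.1)).ncard < n := hn ▸
    (Set.ncard_le_ncard (conjVars_subst_ground ht _) (conjVars_finite _).sdiff).trans_lt
      (Set.ncard_sdiff_singleton_lt_of_mem hx (conjVars_finite _))
  obtain ⟨S', hrun, hS'⟩ := ih _ hlt (h.subst_ground ht) rfl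
  exact ⟨S', .head ⟨x, Or.inl hx, t, hdef, fun u hu => by simp [ht] at hu, rfl⟩ hrun, hS'⟩

theorem SubstStep8.substStep {S S' : State8 σ} (h : SubstStep8 S S') : SubstStep S.1 S'.1 := by
  obtain ⟨x, -, t, hdef, hdep, rfl⟩ := h
  exact ⟨x, Defines.mem_conjVars hdef, t, hdef, hdep, rfl⟩

theorem exists_reachesGround {L : Conj σ} (hiso : ∀ y ∈ conjVars L, ∃ l ∈ L, isolator y l)
    (hacy : AcyclicDeps L) : ∃ L', ReachesGround L L' := by
  rcases (conjVars L).eq_empty_or_nonempty with hL | ⟨v, hv⟩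
  · exact ⟨L, .refl, hL⟩
  -- run the process on the implication form with value term `v`, then drop the value term
  obtain ⟨S, hrun, hS⟩ := IsolatedState.exists_ground_run (S := (L, .var v))
    ⟨fun y hy => hy.elim (hiso y) fun hyv => (Set.mem_singleton_iff.1 hyv) ▸ hiso v hv, hacy⟩
  exact ⟨S.1, hrun.lift Prod.fst fun _ _ => SubstStep8.substStep,
    (Set.union_empty_iff.1 hS).1⟩

theorem exists_reachesGround8 {v : ℕ} {B : Conj σ} (h : RuleIsolated v B) :
    ∃ S, ReachesGround8 B v S :=
  h.isolatedState.exists_ground_run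

def RuleYields (I : Interp σ) (r : ℕ × Conj σ) (a : I.M) : Prop :=
  ∃ μ : ℕ → I.M, μ r.1 = a ∧ SatConj I μ r.2

theorem sat_ruleBody {w : ℕ} {r : ℕ × Conj σ} (hwB : w ∉ conjVars r.2) (ν : ℕ → I.M) (a : I.M) :
    (exN ((conjVarList (conjSubst r.1 (.var w) r.2)).filter (· ≠ w))
        (conjToFormula (conjSubst r.1 (.var w) r.2))).Sat I (updAssign ν w a) ↔
      RuleYields I r a := by
  obtain ⟨v, B⟩ := r
  constructor
  · intro h
    obtain ⟨μ, hμ, hμν⟩ := (sat_exN _ _ _).1 h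
    have hμw : μ w = a := by simpa [updAssign] using hμν w (by simp)
    rw [sat_conjToFormula, satConj_subst] at hμ
    exact ⟨_, by simp [updAssign, Term.eval, hμw], hμ⟩
  · rintro ⟨μ, rfl, hμ⟩
    refine (sat_exN_conjToFormula _ _ _).2 ⟨updAssign μ w (μ v), ?_, fun y hy hyxs => ?_⟩
    · rw [satConj_subst]
      refine (satConj_congr fun y hy => ?_).1 hμ
      have hyw : y ≠ w := fun h => hwB (h ▸ hy)
      by_cases hyv : y = v <;> simp [updAssign, Term.eval, hyv, hyw]
    · have : y = w := by simpa [mem_conjVarList.2 hy] using hyxs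
      simp [updAssign, this]

theorem sat_compDef {w : ℕ} {d : Term σ × List (ℕ × Conj σ)} (hd : d.1.vars = ∅)
    (hw : ∀ r ∈ d.2, w ∉ conjVars r.2) (ν : ℕ → I.M) :
    (compDef w d).Sat I ν ↔ ∀ a : I.M, (d.1.eval I ν = a ↔ ∃ r ∈ d.2, RuleYields I r a) := by
  refine forall_congr' fun a => ?_
  rw [sat_iff, sat_bigOr]
  simp only [Formula.Sat, Term.eval, Term.eval_ground hd _ ν, updAssign, if_true, List.mem_map,
    exists_exists_and_eq_and]
  exact iff_congr Iff.rfl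
    (exists_congr fun r => and_congr_right fun hr => sat_ruleBody (hw r hr) ν a)

theorem sat_compConstraint (ν : ℕ → I.M) (b : Conj σ) :
    (compConstraint b).Sat I ν ↔ ¬ ∃ μ : ℕ → I.M, SatConj I μ b := by
  rw [compConstraint, sat_not, sat_exN_conjToFormula]
  exact not_congr (exists_congr fun μ =>
    and_iff_left fun y hy hy' => absurd (mem_conjVarList.2 hy) hy')

theorem ReachesGround.satConj_iff_ruleYields {f : Term σ} (hf : f.vars = ∅)
    {r : ℕ × Conj σ} {F : Conj σ} (h : ReachesGround (conjSubst r.1 f r.2) F) (ν : ℕ → I.M) :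
    SatConj I ν F ↔ RuleYields I r (f.eval I ν) := by
  rw [h.satConj_iff]
  constructor
  · rintro ⟨μ, hμ⟩
    rw [satConj_subst] at hμ
    exact ⟨_, by simp [updAssign, Term.eval_ground hf μ ν], hμ⟩
  · rintro ⟨μ, hμv, hμ⟩
    refine ⟨μ, (satConj_subst μ r.1 f r.2).2 ?_⟩
    rwa [Term.eval_ground hf μ ν, ← hμv, updAssign_self]

theorem ReachesGround8.imp_iff {r : ℕ × Conj σ} {S : State8 σ} (h : ReachesGround8 r.2 r.1 S)
    (ν : ℕ → I.M) (m : I.M) :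
    (SatConj I ν S.1 → m = S.2.eval I ν) ↔ ∀ a, RuleYields I r a → m = a := by
  rw [← h.forall_satConj_imp_iff ν (m = ·)]
  exact ⟨fun H a ⟨μ, hμv, hμ⟩ => hμv ▸ H μ hμ, fun H μ hμ => H _ ⟨μ, rfl, hμ⟩⟩

theorem ElimDef.sat_iff {d : Term σ × List (ℕ × Conj σ)} {E : Formula σ} (hd : d.1.vars = ∅)
    (hE : ElimDef d E) (ν : ℕ → I.M) :
    E.Sat I ν ↔ (∃ r ∈ d.2, RuleYields I r (d.1.eval I ν)) ∧
      ∀ r ∈ d.2, ∀ a, RuleYields I r a → d.1.eval I ν = a := by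
  obtain ⟨Fs, Gs, hFs, hGs, rfl⟩ := hE
  simp only [Formula.Sat, sat_bigOr, sat_bigAnd, List.forall_mem_map]
  simp only [List.mem_map, exists_exists_and_eq_and, sat_conjToFormula]
  exact and_congr (hFs.exists_iff fun r _ F hF => (hF.satConj_iff_ruleYields hd ν).symm).symm
    (hGs.forall_iff fun r _ S hS => (hS.imp_iff ν _).symm).symm

theorem ElimDef.sat_compDef_iff {w : ℕ} {d : Term σ × List (ℕ × Conj σ)} {E : Formula σ}
    (hd : d.1.vars = ∅) (hw : ∀ r ∈ d.2, w ∉ conjVars r.2) (hE : ElimDef d E)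
    (ν : ℕ → I.M) : (compDef w d).Sat I ν ↔ E.Sat I ν := by
  rw [sat_compDef hd hw, hE.sat_iff hd]
  exact ⟨fun h => ⟨(h _).1 rfl, fun r hr a ha => (h a).2 ⟨r, hr, ha⟩⟩,
    fun ⟨⟨r, hr, hm⟩, hall⟩ a => ⟨fun hma => ⟨r, hr, hma ▸ hm⟩, fun ⟨r, hr, ha⟩ => hall r hr a ha⟩⟩

theorem ElimConstraint.sat_compConstraint_iff {b : Conj σ} {C : Formula σ}
    (hC : ElimConstraint b C) (ν : ℕ → I.M) : (compConstraint b).Sat I ν ↔ C.Sat I ν := by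
  obtain ⟨b', hb', rfl⟩ := hC
  rw [sat_compConstraint, sat_not, sat_conjToFormula, hb'.satConj_iff]

theorem ElimDef.fv_eq_empty {d : Term σ × List (ℕ × Conj σ)} {E : Formula σ}
    (hd : d.1.vars = ∅) (hE : ElimDef d E) : E.fv = ∅ := by
  obtain ⟨Fs, Gs, hFs, hGs, rfl⟩ := hE
  refine Set.union_empty_iff.2 ⟨fv_bigOr ?_, fv_bigAnd ?_⟩ <;> simp only [List.forall_mem_map]
  · exact hFs.forall_mem_right fun r _ F hF => Set.subset_empty_iff.1 (hF.2 ▸ fv_conjToFormula F)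
  · refine hGs.forall_mem_right fun r _ S hS => ?_
    obtain ⟨hS₁, hS₂⟩ := Set.union_empty_iff.1 hS.2
    simp [Formula.fv, hd, hS₂, Set.subset_empty_iff.1 (hS₁ ▸ fv_conjToFormula S.1)]

theorem ElimConstraint.fv_eq_empty {b : Conj σ} {C : Formula σ} (hC : ElimConstraint b C) :
    C.fv = ∅ := by
  obtain ⟨b', hb', rfl⟩ := hC
  simpa [Formula.not, Formula.fv] using Set.subset_empty_iff.1 (hb'.2 ▸ fv_conjToFormula b')

theorem IsHead.vars_eq_empty {U : Set σ.Func} {g : Term σ} (h : IsHead U g) : g.vars = ∅ := by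
  obtain ⟨f, -, ts, rfl, hts⟩ := h
  simp [Term.vars, hts]

theorem exists_elimDef {d : Term σ × List (ℕ × Conj σ)} (hd : d.1.vars = ∅)
    (hiso : ∀ r ∈ d.2, RuleIsolated r.1 r.2) : ∃ E, ElimDef d E := by
  obtain ⟨Fs, hFs⟩ := List.exists_forall₂ fun r hr =>
    have h := (hiso r hr).isolatedState.subst_ground (x := r.1) hd
    exists_reachesGround (fun y hy => h.1 y (Or.inl hy)) h.2
  obtain ⟨Gs, hGs⟩ := List.exists_forall₂ fun r hr => exists_reachesGround8 (hiso r hr)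
  exact ⟨_, Fs, Gs, hFs, hGs, rfl⟩

theorem exists_elimConstraint {b : Conj σ} (h : ConstraintIsolated b) :
    ∃ C, ElimConstraint b C :=
  let ⟨b', hb'⟩ := exists_reachesGround h.1 h.2
  ⟨_, b', hb', rfl⟩

theorem variable_elimination_correct_general {σ : Signature}
    (U : Set σ.Func) (P : Program σ)
    (hheads : ∀ d ∈ P.defs, IsHead U d.1)
    (hiso : ∀ d ∈ P.defs, ∀ r ∈ d.2, RuleIsolated r.1 r.2)
    (hisoC : ∀ b ∈ P.constraints, ConstraintIsolated b)
    (w : ℕ) (hw : ∀ d ∈ P.defs, ∀ r ∈ d.2, w ≠ r.1 ∧ w ∉ conjVars r.2) :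
    -- the method applies, and
    (∃ C, MethodResult P C) ∧
    -- every result of the method contains no variables and is classically
    -- equivalent to the completion
    ∀ C, MethodResult P C →
      C.fv = ∅ ∧ ∀ (I : Interp σ) (ν : ℕ → I.M),
        ((completion P w).Sat I ν ↔ C.Sat I ν) := by
  have hground : ∀ d ∈ P.defs, d.1.vars = ∅ := fun d hd => (hheads d hd).vars_eq_empty
  refine ⟨?_, ?_⟩
  · obtain ⟨Es, hEs⟩ := List.exists_forall₂ fun d hd => exists_elimDef (hground d hd) (hiso d hd)
    obtain ⟨Cs, hCs⟩ := List.exists_forall₂ fun b hb => exists_elimConstraint (hisoC b hb)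
    exact ⟨_, Es, Cs, hEs, hCs, rfl⟩
  rintro _ ⟨Es, Cs, hEs, hCs, rfl⟩
  refine ⟨fv_bigAnd (List.forall_mem_append.2 ⟨?_, ?_⟩), fun I ν => ?_⟩
  · exact hEs.forall_mem_right fun d hd E hE => hE.fv_eq_empty (hground d hd)
  · exact hCs.forall_mem_right fun b _ C hC => hC.fv_eq_empty
  simp only [completion, sat_bigAnd, List.forall_mem_append, List.forall_mem_map]
  exact and_congr
    (hEs.forall_iff fun d hd E hE =>
      hE.sat_compDef_iff (hground d hd) (fun r hr => (hw d hd r hr).2) ν)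
    (hCs.forall_iff fun b _ C hC => hC.sat_compConstraint_iff ν)

/-- For the completion of any variable-isolated ASPMT program in which
no variables occur in arguments of uninterpreted functions, applying the variable
elimination method repeatedly to each equivalence of the completion results in a
formula that is classically equivalent to the completion and contains no
variables.  (`U` is the set of uninterpreted function symbols and `w` is a fresh
variable used as the value variable of the equivalences of the completion.) -/
theorem variable_elimination_correct {σ : Signature}
    (U : Set σ.Func) (P : Program σ)
    (hheads : ∀ d ∈ P.defs, IsHead U d.1)
    (hbodies : ∀ d ∈ P.defs, ∀ r ∈ d.2, conjUGround U r.2)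
    (hconstrs : ∀ b ∈ P.constraints, conjUGround U b)
    (hiso : ∀ d ∈ P.defs, ∀ r ∈ d.2, RuleIsolated r.1 r.2)
    (hisoC : ∀ b ∈ P.constraints, ConstraintIsolated b)
    (w : ℕ) (hw : ∀ d ∈ P.defs, ∀ r ∈ d.2, w ≠ r.1 ∧ w ∉ conjVars r.2) :
    -- the method applies, and
    (∃ C, MethodResult P C) ∧
    -- every result of the method contains no variables and is classically
    -- equivalent to the completion
    ∀ C, MethodResult P C →
      C.fv = ∅ ∧ ∀ (I : Interp σ) (ν : ℕ → I.M),
        ((completion P w).Sat I ν ↔ C.Sat I ν) :=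
  variable_elimination_correct_general U P hheads hiso hisoC w hw

end ASPMT
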